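/- arXiv:0710.0144 — 2 statements merged into one kernel-verified Lean document; each statement's English description precedes it below -/
import Mathlib

section
/- If p is an odd prime such that 2 is a primitive root modulo p, then S_p(2^p) = p, where S_p(x) = ∑_{0 ≤ n < x, p | n} (-1)^{σ(n)} and σ(n) is the number of 1's in the binary expansion of n. -/
/-!
Write `t(n) = (-1)^σ(n)`. Splitting off the lowest binary digit gives the generating function
`∑_{n < 2^m} t(n) zⁿ = ∏_{j < m} (1 - z^(2^j))`. Detecting `p ∣ n` with a primitive additive
character `ψ` of `ZMod p` turns `p · S_p(2^p)` into `∑_k ∏_{j < p} (1 - ψ(k 2^j))`. As 2 is a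
primitive root, for `k ≠ 0` the residues `k 2^j` with `j < p - 1` are exactly the nonzero ones, and
`k 2^(p-1) = k`; so the `k`-th term is `∏_{a ≠ 0} (1 - ψ a) · (1 - ψ k) = p (1 - ψ k)`
(the product is the cyclotomic polynomial `Φ_p` at `1`). Summing over `k` gives `p²`.
-/

open Finset AddChar

def thueMorseSign (n : ℕ) : ℤ := (-1) ^ (Nat.digits 2 n).sum

lemma thueMorseSign_two_mul (n : ℕ) : thueMorseSign (2 * n) = thueMorseSign n := by
  rcases eq_or_ne n 0 with rfl | hn
  · rfl
  · have := Nat.digits_add 2 one_lt_two 0 n two_pos (Or.inr hn)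
    rw [zero_add] at this
    simp [thueMorseSign, this]

lemma thueMorseSign_two_mul_add_one (n : ℕ) : thueMorseSign (2 * n + 1) = -thueMorseSign n := by
  have := Nat.digits_add 2 one_lt_two 1 n one_lt_two (Or.inl one_ne_zero)
  rw [add_comm] at this
  rw [thueMorseSign, thueMorseSign, this, List.sum_cons, pow_add, pow_one, neg_one_mul]

lemma sum_range_two_mul {M : Type*} [AddCommMonoid M] (f : ℕ → M) (n : ℕ) :
    ∑ i ∈ range (2 * n), f i = ∑ i ∈ range n, (f (2 * i) + f (2 * i + 1)) := by
  induction n with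
  | zero => simp
  | succ n ih => rw [Nat.mul_succ, sum_range_succ, sum_range_succ, sum_range_succ, ih, add_assoc]

theorem sum_thueMorseSign_mul_pow {R : Type*} [CommRing R] (m : ℕ) (z : R) :
    ∑ n ∈ range (2 ^ m), (thueMorseSign n : R) * z ^ n = ∏ j ∈ range m, (1 - z ^ 2 ^ j) := by
  induction m generalizing z with
  | zero => simp [thueMorseSign]
  | succ m ih =>
    calc ∑ n ∈ range (2 ^ (m + 1)), (thueMorseSign n : R) * z ^ n
        = ∑ n ∈ range (2 ^ m), (thueMorseSign n : R) * (z ^ 2) ^ n * (1 - z) := by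
          rw [pow_succ', sum_range_two_mul]
          refine sum_congr rfl fun n _ => ?_
          rw [thueMorseSign_two_mul, thueMorseSign_two_mul_add_one, pow_succ, pow_mul]
          push_cast
          ring
      _ = ∏ j ∈ range (m + 1), (1 - z ^ 2 ^ j) := by
          rw [← sum_mul, ih, prod_range_succ']
          simp only [← pow_mul, ← pow_succ', pow_zero, pow_one]

theorem prod_range_mul_pow_eq_prod_erase_zero {K M : Type*} [GroupWithZero K] [Fintype K]
    [DecidableEq K] [CommMonoid M] {g : K} (hg : orderOf g = Fintype.card K - 1) {k : K}
    (hk : k ≠ 0) (f : K → M) :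
    ∏ j ∈ range (Fintype.card K - 1), f (k * g ^ j) = ∏ a ∈ univ.erase 0, f a := by
  have hg0 : g ≠ 0 := by
    rintro rfl
    have := Fintype.one_lt_card (α := K)
    rw [orderOf_zero] at hg
    omega
  have hinj : Set.InjOn (fun j => k * g ^ j) (range (Fintype.card K - 1)) := by
    intro a ha b hb hab
    rw [coe_range, ← hg] at ha hb
    exact pow_injOn_Iio_orderOf ha hb (mul_left_cancel₀ hk hab)
  have himage : (range (Fintype.card K - 1)).image (fun j => k * g ^ j) = univ.erase 0 := by
    refine eq_of_subset_of_card_le (fun x hx => ?_) ?_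
    · obtain ⟨j, -, rfl⟩ := mem_image.mp hx
      exact mem_erase.mpr ⟨mul_ne_zero hk (pow_ne_zero j hg0), mem_univ _⟩
    · rw [card_image_of_injOn hinj, card_erase_of_mem (mem_univ _), card_univ, card_range]
  rw [← himage, prod_image hinj]

theorem ZMod.prod_erase_zero_eq_prod_range {n : ℕ} [NeZero n] {M : Type*} [CommMonoid M] (f : ZMod n → M) :
    ∏ a ∈ univ.erase 0, f a = ∏ i ∈ range (n - 1), f (i + 1 : ℕ) := by
  symm
  refine prod_nbij' (fun i => ((i + 1 : ℕ) : ZMod n)) (fun a => a.val - 1) ?_ ?_ ?_ ?_ ?_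
  · intro i hi
    have hi : i + 1 < n := by grind
    rw [mem_erase, Ne, ZMod.natCast_eq_zero_iff]
    exact ⟨Nat.not_dvd_of_pos_of_lt i.succ_pos hi, mem_univ _⟩
  · intro a ha
    have : a.val ≠ 0 := by simpa [ZMod.val_eq_zero] using ha
    have := a.val_lt
    exact mem_range.mpr (by omega)
  · intro i hi
    have hi : i + 1 < n := by grind
    rw [ZMod.val_natCast, Nat.mod_eq_of_lt hi, Nat.add_sub_cancel]
  · intro a ha
    have : a.val ≠ 0 := by simpa [ZMod.val_eq_zero] using ha
    simp [Nat.sub_add_cancel (Nat.one_le_iff_ne_zero.mpr this)]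
  · intro i hi
    rfl

theorem AddChar.IsPrimitive.isPrimitiveRoot_apply_one {M : Type*} [CommMonoid M] {n : ℕ}
    [NeZero n] {ψ : AddChar (ZMod n) M} (hψ : ψ.IsPrimitive) : IsPrimitiveRoot (ψ 1) n := by
  have h (l : ℕ) : ψ 1 ^ l = 1 ↔ n ∣ l := by
    rw [← map_nsmul_eq_pow, nsmul_one, hψ.zmod_char_eq_one_iff, ZMod.natCast_eq_zero_iff]
  exact ⟨(h n).2 dvd_rfl, fun l => (h l).1⟩

variable {R : Type*} [CommRing R] [IsDomain R]

theorem AddChar.IsPrimitive.prod_erase_zero_one_sub {n : ℕ} [NeZero n]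
    {ψ : AddChar (ZMod n) R} (hψ : ψ.IsPrimitive) : ∏ a ∈ univ.erase 0, (1 - ψ a) = n := by
  obtain ⟨m, rfl⟩ : ∃ m, n = m + 1 := Nat.exists_eq_succ_of_ne_zero (NeZero.ne n)
  rw [ZMod.prod_erase_zero_eq_prod_range]
  simpa [← map_nsmul_eq_pow] using hψ.isPrimitiveRoot_apply_one.prod_one_sub_pow_eq_order

theorem AddChar.IsPrimitive.prod_one_sub_pow_two_pow {p : ℕ} [Fact p.Prime] (h2 : orderOf (2 : ZMod p) = p - 1)
    {ψ : AddChar (ZMod p) R} (hψ : ψ.IsPrimitive) (k : ZMod p) :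
    ∏ j ∈ range p, (1 - ψ k ^ 2 ^ j) = p * (1 - ψ k) := by
  rcases eq_or_ne k 0 with rfl | hk
  · simp [(Fact.out : p.Prime).ne_zero]
  have hpow (j : ℕ) : ψ k ^ 2 ^ j = ψ (k * 2 ^ j) := by
    rw [← map_nsmul_eq_pow, nsmul_eq_mul, mul_comm]
    push_cast
    rfl
  have h2p : (2 : ZMod p) ^ (p - 1) = 1 := h2 ▸ pow_orderOf_eq_one 2
  have hrange : range p = range (p - 1 + 1) := by
    rw [Nat.sub_add_cancel (Fact.out : p.Prime).one_le]
  rw [hrange, prod_range_succ]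
  simp only [hpow, h2p, mul_one]
  have hnonzero :=
    prod_range_mul_pow_eq_prod_erase_zero (by rwa [ZMod.card]) hk (fun a => 1 - ψ a)
  rw [ZMod.card] at hnonzero
  rw [hnonzero, hψ.prod_erase_zero_one_sub]

theorem sum_range_two_pow_ite_dvd_thueMorseSign {p : ℕ} [Fact p.Prime]
    (h2 : orderOf (2 : ZMod p) = p - 1) {ψ : AddChar (ZMod p) R} (hψ : ψ.IsPrimitive) :
    ((∑ n ∈ range (2 ^ p), if p ∣ n then thueMorseSign n else 0 : ℤ) : R) = p := by
  have hp0 : (p : R) ≠ 0 := hψ.isPrimitiveRoot_apply_one.neZero'.out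
  refine mul_left_cancel₀ hp0 ?_
  calc (p : R) * _ = ∑ n ∈ range (2 ^ p), (thueMorseSign n : R) * ∑ k : ZMod p, ψ (k * n) := by
        push_cast
        rw [mul_sum]
        refine sum_congr rfl fun n _ => ?_
        simp only [sum_mulShift _ hψ, ZMod.natCast_eq_zero_iff]
        split_ifs <;> simp [ZMod.card, mul_comm]
    _ = ∑ k : ZMod p, ∑ n ∈ range (2 ^ p), (thueMorseSign n : R) * ψ k ^ n := by
        simp_rw [mul_sum]
        rw [sum_comm]
        simp [← map_nsmul_eq_pow, mul_comm]
    _ = ∑ k : ZMod p, p * (1 - ψ k) := by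
        simp_rw [sum_thueMorseSign_mul_pow, hψ.prod_one_sub_pow_two_pow h2]
    _ = p * p := by
        have hsum : ∑ k, ψ k = 0 := by simpa using sum_mulShift 1 hψ
        rw [← mul_sum, sum_sub_distrib, hsum]
        simp [ZMod.card]

theorem S_p_two_pow_p_eq_p_general (p : ℕ) (hp : p.Prime)
    (h2 : orderOf (2 : ZMod p) = p - 1) :
    (∑ n ∈ Finset.range (2 ^ p),
        if p ∣ n then (-1 : ℤ) ^ ((Nat.digits 2 n).sum) else 0) = p := by
  have : Fact p.Prime := ⟨hp⟩
  exact_mod_cast sum_range_two_pow_ite_dvd_thueMorseSign (R := ℂ) h2 (ZMod.isPrimitive_stdAddChar p)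

theorem S_p_two_pow_p_eq_p (p : ℕ) (hp : p.Prime) (hodd : Odd p)
    (h2 : orderOf (2 : ZMod p) = p - 1) :
    (∑ n ∈ Finset.range (2 ^ p),
        if p ∣ n then (-1 : ℤ) ^ ((Nat.digits 2 n).sum) else 0) = p :=
  S_p_two_pow_p_eq_p_general p hp h2
end

section
/- For any prime p and integer k ≥ 1, S_p(2^k) = (1/p) ∑_{l=1}^{p-1} ∏_{j=0}^{k-1} (1 - ω^{l·2^j}), where ω is a primitive p-th root of unity and S_p(x) = ∑_{0 ≤ n < x, p | n} (-1)^{σ(n)}. -/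
/-!
Filter the multiples of `p` with the orthogonality relation `(1/p) ∑_{l<p} ω^{ln} = [p ∣ n]` and
swap the sums. Each inner sum `∑_{n<2^k} (-1)^{σ(n)} x^n` with `x = ω^l` factors as
`∏_{j<k} (1 - x^{2^j})`: splitting off the top binary digit of `n` contributes `1 - x^{2^(k-1)}`.
The term `l = 0` vanishes because `k ≥ 1`.
-/

open Finset

theorem Nat.digits_sum_base_pow_mul_add {b d k m : ℕ} (hd : d < b) (hm : m < b ^ k) :
    (Nat.digits b (b ^ k * d + m)).sum = d + (Nat.digits b m).sum := by
  rcases Nat.eq_zero_or_pos d with rfl | hd0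
  · simp
  have hb : 1 < b := lt_of_le_of_lt hd0 hd
  have hlen : (Nat.digits b m).length ≤ k := (Nat.digits_length_le_iff hb m).mpr hm
  have hdigits :=
    Nat.digits_append_zeroes_append_digits (k := k - (Nat.digits b m).length) (n := m) hb hd0
  rw [Nat.add_sub_cancel' hlen, Nat.digits_of_lt b d hd0.ne' hd] at hdigits
  rw [add_comm, ← hdigits]
  simp [add_comm]

theorem sum_range_two_pow_neg_one_pow_digits_sum_mul_pow {R : Type*} [CommRing R] (x : R)
    (k : ℕ) :
    ∑ n ∈ range (2 ^ k), (-1 : R) ^ (Nat.digits 2 n).sum * x ^ n =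
      ∏ j ∈ range k, (1 - x ^ 2 ^ j) := by
  induction k with
  | zero => simp
  | succ k ih =>
    have top_bit : ∀ m ∈ range (2 ^ k),
        (-1 : R) ^ (Nat.digits 2 (2 ^ k + m)).sum * x ^ (2 ^ k + m) =
          -x ^ 2 ^ k * ((-1 : R) ^ (Nat.digits 2 m).sum * x ^ m) := fun m hm => by
      have := Nat.digits_sum_base_pow_mul_add (d := 1) one_lt_two (mem_range.mp hm)
      rw [mul_one] at this
      rw [this, pow_add, pow_add]
      ring
    rw [pow_succ, mul_two, sum_range_add, sum_congr rfl top_bit, ← mul_sum, ih, prod_range_succ]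
    ring

theorem IsPrimitiveRoot.sum_range_pow_pow_eq_ite {R : Type*} [CommRing R] [IsDomain R] {ω : R}
    {p : ℕ} (hω : IsPrimitiveRoot ω p) (n : ℕ) :
    ∑ l ∈ range p, (ω ^ n) ^ l = if p ∣ n then (p : R) else 0 := by
  split_ifs with h
  · simp [(hω.pow_eq_one_iff_dvd n).mpr h]
  · have hne : 1 - ω ^ n ≠ 0 :=
      sub_ne_zero.mpr fun h' => h ((hω.pow_eq_one_iff_dvd n).mp h'.symm)
    refine eq_zero_of_ne_zero_of_mul_left_eq_zero hne ?_
    rw [mul_neg_geom_sum, ← pow_mul, pow_mul', hω.pow_eq_one, one_pow, sub_self]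

theorem S_p_two_pow_k_formula (p : ℕ) (hp : p.Prime) (k : ℕ) (hk : 1 ≤ k)
    (ω : ℂ) (hω : IsPrimitiveRoot ω p) :
    (∑ n ∈ Finset.range (2 ^ k),
        if p ∣ n then (-1 : ℂ) ^ ((Nat.digits 2 n).sum) else 0) =
      (1 / p) * ∑ l ∈ Finset.Icc 1 (p - 1),
        ∏ j ∈ Finset.range k, (1 - ω ^ (l * 2 ^ j)) := by
  have hp0 : (p : ℂ) ≠ 0 := Nat.cast_ne_zero.mpr hp.ne_zero
  have filter_by_roots : ∀ n, (if p ∣ n then (-1 : ℂ) ^ (Nat.digits 2 n).sum else 0) =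
      1 / p * ∑ l ∈ range p, (-1 : ℂ) ^ (Nat.digits 2 n).sum * (ω ^ l) ^ n := fun n => by
    simp_rw [← pow_mul, mul_comm _ n, pow_mul, ← mul_sum, hω.sum_range_pow_pow_eq_ite]
    split_ifs
    · field_simp
    · simp
  have trivial_character : ∏ j ∈ range k, (1 - (ω ^ 0) ^ 2 ^ j : ℂ) = 0 :=
    prod_eq_zero (mem_range.mpr hk) (by simp)
  calc _ = 1 / (p : ℂ) * ∑ l ∈ range p, ∏ j ∈ range k, (1 - (ω ^ l) ^ 2 ^ j) := by
        simp_rw [filter_by_roots]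
        rw [← mul_sum, sum_comm]
        simp_rw [sum_range_two_pow_neg_one_pow_digits_sum_mul_pow]
    _ = _ := by
        rw [sum_range_eq_add_Ico _ hp.pos, trivial_character, zero_add,
          ← Icc_sub_one_right_eq_Ico_of_not_isMin (not_isMin_iff_ne_bot.mpr hp.ne_zero)]
        simp_rw [← pow_mul]
end
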